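/- arXiv:2109.14236 — 3 statements merged into one kernel-verified Lean document; each statement's English description precedes it below -/
import Mathlib

section
/- Uniform sum privacy: if Z₁, ..., Z_n are i.i.d. uniform random variables on a finite additive group G and independent of random variables X₁,...,X_n, then the tuple (X₁ + Z₁, ..., X_n + Z_n) is independent of (X₁, ..., X_n). -/
open ProbabilityTheory MeasureTheory

lemma uniform_sum_privacy_aux
    {H : Type*} [AddCommGroup H] [Fintype H]
    [MeasurableSpace H] [MeasurableSingletonClass H]
    {Ω : Type*} [MeasurableSpace Ω] (μ : Measure Ω) [IsProbabilityMeasure μ]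
    (X Z : Ω → H) (hX : Measurable X) (hZ : Measurable Z)
    (hZunif : μ.map Z = (PMF.uniformOfFintype H).toMeasure)
    (hind : IndepFun Z X μ) :
    IndepFun (fun ω => X ω + Z ω) X μ := by
  have hXZ : Measurable (fun ω => X ω + Z ω) := hX.add hZ
  rw [indepFun_iff_map_prod_eq_prod_map_map hXZ.aemeasurable hX.aemeasurable]
  -- measure of fibers of Z
  have hZfib : ∀ c : H, μ (Z ⁻¹' {c}) = (Fintype.card H : ENNReal)⁻¹ := by
    intro c
    rw [← Measure.map_apply hZ (measurableSet_singleton c), hZunif,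
      PMF.toMeasure_apply_singleton _ _ (measurableSet_singleton c),
      PMF.uniformOfFintype_apply]
  -- joint fiber measure
  have hjoint : ∀ a b : H,
      μ ((fun ω => X ω + Z ω) ⁻¹' {a} ∩ X ⁻¹' {b})
        = μ (X ⁻¹' {b}) * (Fintype.card H : ENNReal)⁻¹ := by
    intro a b
    have hset : (fun ω => X ω + Z ω) ⁻¹' {a} ∩ X ⁻¹' {b}
        = Z ⁻¹' {a - b} ∩ X ⁻¹' {b} := by
      ext ω
      simp only [Set.mem_inter_iff, Set.mem_preimage, Set.mem_singleton_iff]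
      constructor
      · rintro ⟨h1, h2⟩; subst h2; exact ⟨by rw [← h1]; abel, rfl⟩
      · rintro ⟨h1, h2⟩; subst h2; exact ⟨by rw [h1]; abel, rfl⟩
    rw [hset, hind.measure_inter_preimage_eq_mul _ _ (measurableSet_singleton _)
      (measurableSet_singleton _), hZfib, mul_comm]
  -- marginal of X + Z is uniform
  have hmargin : ∀ a : H, μ ((fun ω => X ω + Z ω) ⁻¹' {a})
      = (Fintype.card H : ENNReal)⁻¹ := by
    intro a
    have hdecomp : (fun ω => X ω + Z ω) ⁻¹' {a}
        = ⋃ b : H, ((fun ω => X ω + Z ω) ⁻¹' {a} ∩ X ⁻¹' {b}) := by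
      ext ω
      simp only [Set.mem_iUnion, Set.mem_inter_iff, Set.mem_preimage,
        Set.mem_singleton_iff]
      exact ⟨fun h => ⟨X ω, h, rfl⟩, fun ⟨b, h, _⟩ => h⟩
    rw [hdecomp, measure_iUnion]
    · simp only [hjoint]
      rw [ENNReal.tsum_mul_right, ← measure_iUnion]
      · have : ⋃ b : H, X ⁻¹' {b} = Set.univ := by
          ext ω; simp
        rw [this, measure_univ, one_mul]
      · intro i j hij
        simp only [Function.onFun, Set.disjoint_left, Set.mem_preimage,
          Set.mem_singleton_iff]
        rintro ω rfl h; exact hij h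
      · exact fun b => hX (measurableSet_singleton b)
    · intro i j hij
      simp only [Function.onFun, Set.disjoint_left, Set.mem_inter_iff,
        Set.mem_preimage, Set.mem_singleton_iff]
      rintro ω ⟨-, rfl⟩ ⟨-, h⟩; exact hij h
    · exact fun b => (hXZ (measurableSet_singleton a)).inter
        (hX (measurableSet_singleton b))
  apply Measure.ext_of_singleton
  rintro ⟨a, b⟩
  have h1 : ({(a, b)} : Set (H × H)) = {a} ×ˢ {b} := by
    rw [Set.singleton_prod_singleton]
  rw [h1, Measure.prod_prod,
    Measure.map_apply (hXZ.prodMk hX) ((measurableSet_singleton a).prod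
      (measurableSet_singleton b)),
    Measure.map_apply hXZ (measurableSet_singleton a),
    Measure.map_apply hX (measurableSet_singleton b), hmargin]
  have h2 : (fun ω => (X ω + Z ω, X ω)) ⁻¹' ({a} ×ˢ {b})
      = (fun ω => X ω + Z ω) ⁻¹' {a} ∩ X ⁻¹' {b} := by
    ext ω; simp [Set.mem_prod]
  rw [h2, hjoint, mul_comm]

theorem uniform_sum_privacy
    {G : Type*} [AddCommGroup G] [Fintype G] [Nonempty G]
    [MeasurableSpace G] [MeasurableSingletonClass G] [DiscreteMeasurableSpace G]
    (n : ℕ)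
    {Ω : Type*} [MeasurableSpace Ω] (μ : MeasureTheory.Measure Ω)
    [MeasureTheory.IsProbabilityMeasure μ]
    (X Z : Fin n → Ω → G)
    (hX : ∀ i, Measurable (X i)) (hZ : ∀ i, Measurable (Z i))
    (hZunif : μ.map (fun ω => fun i => Z i ω) =
      (PMF.uniformOfFintype (Fin n → G)).toMeasure)
    (hind : IndepFun (fun ω => fun i => Z i ω) (fun ω => fun i => X i ω) μ) :
    IndepFun (fun ω => fun i => X i ω + Z i ω) (fun ω => fun i => X i ω) μ := by
  exact uniform_sum_privacy_aux μ (fun ω i => X i ω) (fun ω i => Z i ω)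
    (measurable_pi_lambda _ fun i => hX i) (measurable_pi_lambda _ fun i => hZ i)
    hZunif hind
end

section
/- T-privacy of Shamir-like MDS encoding: let W ∈ F^{U×N} be such that the submatrix of its last T rows restricted to any T columns is invertible. Fix a secret s ∈ F^{U−T}. Then the map sending the random pad n ∈ F^T to the T encoded shares ((s,n) · W_{τ(l)})_{l ∈ Fin T} (for any injective τ : Fin T → Fin N) is a bijection from F^T onto F^T. Consequently, if n is uniform, any T shares are uniformly distributed independently of s. -/
theorem shamir_mds_share_bijective
    {F : Type*} [Field F] [Fintype F] (T U N : ℕ) (hTU : T < U) (hUN : U ≤ N)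
    (W : Matrix (Fin U) (Fin N) F)
    (hpriv : ∀ τ : Fin T → Fin N, Function.Injective τ →
      IsUnit (Matrix.of fun k l : Fin T =>
        W ⟨U - T + (k : ℕ), by have := k.isLt; omega⟩ (τ l)))
    (s : Fin (U - T) → F) (τ : Fin T → Fin N) (hτ : Function.Injective τ) :
    Function.Bijective (fun n : Fin T → F => fun l : Fin T =>
      ∑ k : Fin U,
        (if h : (k : ℕ) < U - T then s ⟨k, h⟩
          else n ⟨(k : ℕ) - (U - T), by have := k.isLt; omega⟩) * W k (τ l)) := by
  set B : Matrix (Fin T) (Fin T) F := Matrix.of fun k l : Fin T =>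
    W ⟨U - T + (k : ℕ), by have := k.isLt; omega⟩ (τ l) with hBdef
  have hB : IsUnit B := hpriv τ hτ
  have hU : U - T + T = U := by omega
  have key : ∀ (n : Fin T → F) (l : Fin T),
      (∑ k : Fin U,
        (if h : (k : ℕ) < U - T then s ⟨k, h⟩
          else n ⟨(k : ℕ) - (U - T), by have := k.isLt; omega⟩) * W k (τ l))
      = (∑ k : Fin (U - T), s k * W ⟨k, by omega⟩ (τ l)) + Matrix.vecMul n B l := by
    intro n l
    rw [Matrix.vecMul]
    rw [← Equiv.sum_comp (finSumFinEquiv.trans (finCongr hU)) (fun k : Fin U =>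
        (if h : (k : ℕ) < U - T then s ⟨k, h⟩
          else n ⟨(k : ℕ) - (U - T), by have := k.isLt; omega⟩) * W k (τ l))]
    rw [Fintype.sum_sum_type]
    congr 1
    · apply Finset.sum_congr rfl
      intro k _
      have hk : (((finSumFinEquiv.trans (finCongr hU)) (Sum.inl k) : Fin U) : ℕ) = (k : ℕ) := by
        simp
      rw [dif_pos (by rw [hk]; exact k.isLt)]
      exact congrArg₂ (· * ·) (congrArg s (Fin.ext hk))
        (congrArg (fun i => W i (τ l)) (Fin.ext hk))
    · apply Finset.sum_congr rfl
      intro k _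
      have hk : (((finSumFinEquiv.trans (finCongr hU)) (Sum.inr k) : Fin U) : ℕ)
          = U - T + (k : ℕ) := by simp
      rw [dif_neg (by omega)]
      simp only [dotProduct, Matrix.of_apply, hBdef]
      exact congrArg₂ (· * ·) (congrArg n (Fin.ext (by simp [hk])))
        (congrArg (fun i => W i (τ l)) (Fin.ext hk))
  have hinj : Function.Injective (fun n : Fin T → F => Matrix.vecMul n B) :=
    Matrix.vecMul_injective_iff_isUnit.2 hB
  have : Function.Injective (fun n : Fin T → F => fun l : Fin T =>
      ∑ k : Fin U,
        (if h : (k : ℕ) < U - T then s ⟨k, h⟩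
          else n ⟨(k : ℕ) - (U - T), by have := k.isLt; omega⟩) * W k (τ l)) := by
    intro n1 n2 h
    apply hinj
    funext l
    have h' := congrFun h l
    simp only [key] at h'
    exact add_left_cancel h'
  exact Finite.injective_iff_bijective.mp this
end

section
/- Independence of individual masks from any T encoded shares: under the T-private MDS encoding, if Z is uniform on F^{U−T} (the partitioned mask), N is uniform on F^T and independent of Z, then the T shares obtained from any T columns are independent of Z; i.e., I(Z; shares_T) = 0. -/
/-!
This is the one-time pad argument. The private columns of `W` form an invertible matrix `M`, so
`S = f Z + Nr ᵥ* M` where, for every value of `Z`, the map `Nr ↦ f Z + Nr ᵥ* M` is a bijection.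
A bijection preserves the uniform law, so given `Z` the shares are still uniform: the joint law
of `(Z, S)` is the law of `Z` times the uniform law, which is independence.
-/

open ProbabilityTheory

section

open MeasureTheory Function

theorem PMF.map_toMeasure_uniformOfFintype_of_bijective {β : Type*} [Fintype β] [Nonempty β]
    [MeasurableSpace β] [MeasurableSingletonClass β] {g : β → β} (hg : Bijective g) :
    (PMF.uniformOfFintype β).toMeasure.map g = (PMF.uniformOfFintype β).toMeasure := by
  classical
  ext s hs
  have hgm : Measurable g := measurable_of_finite g
  rw [Measure.map_apply hgm hs, PMF.toMeasure_uniformOfFintype_apply (s := s) hs,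
    PMF.toMeasure_uniformOfFintype_apply (s := g ⁻¹' s) (hs.preimage hgm)]
  congr 2
  exact Fintype.card_congr ((Equiv.ofBijective g hg).subtypeEquiv fun _ => Iff.rfl)

theorem ProbabilityTheory.IndepFun.indepFun_of_bijective_of_uniform
    {Ω α β : Type*} [MeasurableSpace Ω] {μ : Measure Ω} [IsProbabilityMeasure μ]
    [MeasurableSpace α] [Fintype β] [Nonempty β] [MeasurableSpace β] [MeasurableSingletonClass β]
    {X : Ω → α} {Y : Ω → β} (hX : Measurable X) (hY : Measurable Y) (hXY : IndepFun X Y μ)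
    (hYunif : μ.map Y = (PMF.uniformOfFintype β).toMeasure)
    {h : α → β → β} (hh : Measurable (uncurry h)) (hbij : ∀ x, Bijective (h x)) :
    IndepFun (fun ω => h (X ω) (Y ω)) X μ := by
  set U := (PMF.uniformOfFintype β).toMeasure
  have hprod : MeasurePreserving (fun p : α × β => (p.1, h p.1 p.2))
      ((μ.map X).prod U) ((μ.map X).prod U) :=
    (MeasurePreserving.id _).skew_product hh
      (ae_of_all _ fun x => PMF.map_toMeasure_uniformOfFintype_of_bijective (hbij x))
  have hjoint : μ.map (fun ω => (X ω, h (X ω) (Y ω))) = (μ.map X).prod U := by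
    calc μ.map (fun ω => (X ω, h (X ω) (Y ω)))
        = (μ.map fun ω => (X ω, Y ω)).map fun p => (p.1, h p.1 p.2) :=
          (Measure.map_map hprod.measurable (hX.prodMk hY)).symm
      _ = ((μ.map X).prod U).map fun p => (p.1, h p.1 p.2) := by
          rw [(indepFun_iff_map_prod_eq_prod_map_map hX.aemeasurable hY.aemeasurable).1 hXY,
            hYunif]
      _ = (μ.map X).prod U := hprod.map_eq
  have hhXY : Measurable fun ω => h (X ω) (Y ω) := hh.comp (hX.prodMk hY)
  have hmarg : μ.map (fun ω => h (X ω) (Y ω)) = U := by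
    calc μ.map (fun ω => h (X ω) (Y ω))
        = (μ.map fun ω => (X ω, h (X ω) (Y ω))).map Prod.snd :=
          (Measure.map_map measurable_snd (hX.prodMk hhXY)).symm
      _ = U := by
          rw [hjoint, Measure.map_snd_prod, Measure.map_apply hX .univ, Set.preimage_univ,
            measure_univ, one_smul]
  refine IndepFun.symm ?_
  rw [indepFun_iff_map_prod_eq_prod_map_map hX.aemeasurable hhXY.aemeasurable, hjoint, hmarg]

end

theorem t_private_shares_independent_of_mask
    {F : Type*} [Field F] [Fintype F]
    [MeasurableSpace F] [MeasurableSingletonClass F]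
    (T U N : ℕ) (hTU : T < U)
    (W : Matrix (Fin U) (Fin N) F)
    (hpriv : ∀ τ' : Fin T → Fin N, Function.Injective τ' →
      IsUnit (Matrix.of fun k l : Fin T =>
        W ⟨U - T + (k : ℕ), by have := k.isLt; omega⟩ (τ' l)))
    (τ : Fin T → Fin N) (hτ : Function.Injective τ)
    {Ω : Type*} [MeasurableSpace Ω] (μ : MeasureTheory.Measure Ω)
    [MeasureTheory.IsProbabilityMeasure μ]
    (Z : Ω → (Fin (U - T) → F)) (Nr : Ω → (Fin T → F))
    (hZ : Measurable Z) (hNr : Measurable Nr)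
    (hNrunif : μ.map Nr = (PMF.uniformOfFintype (Fin T → F)).toMeasure)
    (hind : IndepFun Z Nr μ)
    (S : Ω → (Fin T → F))
    (hS : ∀ ω l, S ω l =
      (∑ k : Fin (U - T), Z ω k * W ⟨(k : ℕ), by have := k.isLt; omega⟩ (τ l)) +
      (∑ k : Fin T, Nr ω k * W ⟨U - T + (k : ℕ), by have := k.isLt; omega⟩ (τ l))) :
    IndepFun S Z μ := by
  set M : Matrix (Fin T) (Fin T) F := Matrix.of fun k l : Fin T =>
    W ⟨U - T + (k : ℕ), by have := k.isLt; omega⟩ (τ l)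
  set f : (Fin (U - T) → F) → Fin T → F := fun z l =>
    ∑ k : Fin (U - T), z k * W ⟨(k : ℕ), by have := k.isLt; omega⟩ (τ l)
  have hSf : S = fun ω => f (Z ω) + Matrix.vecMul (Nr ω) M := by
    funext ω l
    simp [hS ω l, f, M, Matrix.vecMul, dotProduct]
  have hM : IsUnit M := hpriv τ hτ
  rw [hSf]
  exact hind.indepFun_of_bijective_of_uniform hZ hNr hNrunif (measurable_of_countable _)
    fun z => (Equiv.addLeft (f z)).bijective.comp
      ⟨Matrix.vecMul_injective_iff_isUnit.2 hM, Matrix.vecMul_surjective_iff_isUnit.2 hM⟩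
end
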